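/- For any finite simple graph G with at least 2k vertices, the difference index satisfies D(G) ≥ δ_{2k}(G) − k + 1, where δ_{2k}(G) denotes the 2k-th smallest vertex degree of G. -/

import Mathlib

/-!
Fix an injective labelling `f` attaining `D(G)`. A vertex `v` with fewer than `k` vertices
labelled below it has at least `deg v - (k - 1)` neighbours labelled above it, and these give
pairwise distinct differences `f w - f v`; symmetrically for fewer than `k` vertices above it.
Fewer than `2k` vertices have degree below `δ_{2k}`. The vertices labelled below the
lowest-labelled vertex of degree at least `δ_{2k}`, and those labelled above the highest-labelled
one, are disjoint sets of such low-degree vertices, so one of them has fewer than `k` elements.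
-/

open SimpleGraph

/-- The difference index of a finite simple graph. -/
noncomputable def diffIndex {V : Type*} [Fintype V] (G : SimpleGraph V) : ℕ :=
  sInf {n | ∃ f : V → ℤ, Function.Injective f ∧
    {s : ℤ | ∃ u v, G.Adj u v ∧ s = |f u - f v|}.ncard = n}

/-- `δ_j(G)`: the `j`-th smallest vertex degree of `G` (1-indexed). -/
def nthSmallestDegree {V : Type*} [Fintype V] (G : SimpleGraph V) [DecidableRel G.Adj]
    (j : ℕ) : ℕ :=
  ((Finset.univ.val.map fun v => G.degree v).sort (· ≤ ·)).getD (j - 1) 0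

theorem List.Pairwise.length_filter_lt_getElem_le {α : Type*} [LinearOrder α] {L : List α}
    (hL : L.Pairwise (· ≤ ·)) {i : ℕ} (hi : i < L.length) :
    (L.filter (· < L[i])).length ≤ i := by
  have hge : ∀ a ∈ L.drop i, ¬ a < L[i] := by
    have hdrop := hL.drop (i := i)
    rw [List.drop_eq_getElem_cons hi] at hdrop ⊢
    rintro a (_ | ⟨_, ha⟩)
    · exact lt_irrefl _
    · exact not_lt.2 (List.rel_of_pairwise_cons hdrop ha)
  calc (L.filter (· < L[i])).length
      = ((L.take i ++ L.drop i).filter (· < L[i])).length := by rw [L.take_append_drop i]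
    _ = ((L.take i).filter (· < L[i])).length := by
      rw [List.filter_append, (List.filter_eq_nil_iff (l := L.drop i)).2 (by simpa using hge),
        List.append_nil]
    _ ≤ i := (List.length_filter_le _ _).trans (List.length_take_le _ _)

theorem Multiset.card_filter_lt_sort_getElem_le {α : Type*} [LinearOrder α] (s : Multiset α)
    {i : ℕ} (hi : i < (s.sort (· ≤ ·)).length) :
    (s.filter (· < (s.sort (· ≤ ·))[i])).card ≤ i := by
  have h := (s.pairwise_sort (· ≤ ·)).length_filter_lt_getElem_le hi
  rwa [← Multiset.coe_card, ← Multiset.filter_coe, Multiset.sort_eq] at h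

open Finset

theorem card_degree_lt_nthSmallestDegree_lt {V : Type*} [Fintype V] (G : SimpleGraph V)
    [DecidableRel G.Adj] {j : ℕ} (hj : 1 ≤ j) (hjV : j ≤ Fintype.card V) :
    #{v | G.degree v < nthSmallestDegree G j} < j := by
  set degrees := univ.val.map fun v => G.degree v
  have hlen : j - 1 < (degrees.sort (· ≤ ·)).length := by
    rw [Multiset.length_sort, Multiset.card_map]
    exact lt_of_lt_of_le (by omega) hjV
  rw [show nthSmallestDegree G j = (degrees.sort (· ≤ ·))[j - 1] from
    List.getD_eq_getElem _ _ hlen]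
  calc #{v | G.degree v < (degrees.sort (· ≤ ·))[j - 1]}
      = (degrees.filter (· < (degrees.sort (· ≤ ·))[j - 1])).card := by
        rw [Multiset.filter_map, Multiset.card_map]; rfl
    _ ≤ j - 1 := degrees.card_filter_lt_sort_getElem_le hlen
    _ < j := by omega

theorem Finset.exists_mem_few_below_or_few_above {V β : Type*} [Fintype V] [DecidableEq V]
    [LinearOrder β] (f : V → β) {T : Finset V} (hT : T.Nonempty) {k : ℕ}
    (hTc : #Tᶜ < 2 * k) :
    ∃ v ∈ T, #{u | f u < f v} < k ∨ #{u | f v < f u} < k := by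
  obtain ⟨v, hvT, hv⟩ := T.exists_min_image f hT
  obtain ⟨w, hwT, hw⟩ := T.exists_max_image f hT
  have hbelow : ({u | f u < f v} : Finset V) ⊆ Tᶜ := fun u hu =>
    mem_compl.2 fun huT => (hv u huT).not_gt (mem_filter.1 hu).2
  have habove : ({u | f w < f u} : Finset V) ⊆ Tᶜ := fun u hu =>
    mem_compl.2 fun huT => (hw u huT).not_gt (mem_filter.1 hu).2
  have hdisj : Disjoint ({u | f u < f v} : Finset V) ({u | f w < f u} : Finset V) :=
    disjoint_filter.2 fun u _ hlt hgt => (hlt.trans_le (hv w hwT)).trans hgt |>.false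
  have hsum := card_le_card (union_subset hbelow habove)
  rw [card_union_of_disjoint hdisj] at hsum
  rcases lt_or_ge #{u | f u < f v} k with hv' | hv'
  · exact ⟨v, hvT, .inl hv'⟩
  · exact ⟨w, hwT, .inr (by omega)⟩

namespace SimpleGraph

variable {V : Type*} (G : SimpleGraph V)

def edgeDiffs (f : V → ℤ) : Set ℤ :=
  {s | ∃ u v, G.Adj u v ∧ s = |f u - f v|}

theorem edgeDiffs_finite [Finite V] (f : V → ℤ) : (G.edgeDiffs f).Finite :=
  (Set.finite_range fun p : V × V => |f p.1 - f p.2|).subset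
    (by rintro _ ⟨u, v, -, rfl⟩; exact ⟨(u, v), rfl⟩)

theorem edgeDiffs_neg (f : V → ℤ) : G.edgeDiffs (-f) = G.edgeDiffs f := by
  simp only [edgeDiffs, Pi.neg_apply, neg_sub_neg, abs_sub_comm]

theorem exists_injective_ncard_edgeDiffs_eq_diffIndex [Fintype V] :
    ∃ f : V → ℤ, Function.Injective f ∧ (G.edgeDiffs f).ncard = diffIndex G := by
  have hinj : Function.Injective fun v => ((Fintype.equivFin V v : ℕ) : ℤ) :=
    Nat.cast_injective.comp (Fin.val_injective.comp (Fintype.equivFin V).injective)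
  have hne : {n | ∃ f : V → ℤ, Function.Injective f ∧ (G.edgeDiffs f).ncard = n}.Nonempty :=
    ⟨_, _, hinj, rfl⟩
  exact Nat.sInf_mem hne

variable [Fintype V] [DecidableRel G.Adj] {f : V → ℤ}

theorem degree_le_card_lt_add_ncard_edgeDiffs (hf : Function.Injective f) (v : V) :
    G.degree v ≤ #{u | f u < f v} + (G.edgeDiffs f).ncard := by
  have hsplit := (G.neighborFinset v).card_filter_add_card_filter_not (fun u => f v < f u)
  have hlower : #{u ∈ G.neighborFinset v | ¬ f v < f u} ≤ #{u | f u < f v} :=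
    card_le_card fun u hu => by
      obtain ⟨hadj, hle⟩ := mem_filter.1 hu
      exact mem_filter.2 ⟨mem_univ u,
        (not_lt.1 hle).lt_of_ne (hf.ne ((G.mem_neighborFinset v u).1 hadj).ne.symm)⟩
  have hupper : #{u ∈ G.neighborFinset v | f v < f u} ≤ (G.edgeDiffs f).ncard := by
    rw [← Set.ncard_coe_finset]
    refine Set.ncard_le_ncard_of_injOn (fun u => f u - f v) ?_ ?_ (G.edgeDiffs_finite f)
    · intro u hu
      obtain ⟨hadj, hlt⟩ := mem_filter.1 hu
      exact ⟨u, v, ((G.mem_neighborFinset v u).1 hadj).symm, (abs_of_pos (sub_pos.2 hlt)).symm⟩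
    · intro a _ b _ h
      exact hf (sub_left_injective h)
  rw [← card_neighborFinset_eq_degree]
  omega

theorem degree_le_card_gt_add_ncard_edgeDiffs (hf : Function.Injective f) (v : V) :
    G.degree v ≤ #{u | f v < f u} + (G.edgeDiffs f).ncard := by
  simpa [G.edgeDiffs_neg] using
    G.degree_le_card_lt_add_ncard_edgeDiffs (f := -f) (neg_injective.comp hf) v

end SimpleGraph

theorem stmt5 {V : Type*} [Fintype V] (G : SimpleGraph V) [DecidableRel G.Adj]
    (k : ℕ) (hk : 1 ≤ k) (hcard : 2 * k ≤ Fintype.card V) :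
    (nthSmallestDegree G (2 * k) : ℤ) - k + 1 ≤ (diffIndex G : ℤ) := by
  classical
  obtain ⟨f, hf, hfD⟩ := G.exists_injective_ncard_edgeDiffs_eq_diffIndex
  set δ := nthSmallestDegree G (2 * k)
  set T : Finset V := {v | δ ≤ G.degree v}
  have hTc : #Tᶜ < 2 * k := by
    simpa [T, compl_filter] using card_degree_lt_nthSmallestDegree_lt G (by omega) hcard
  have hT : T.Nonempty := card_pos.1 (by have := card_compl_add_card T; omega)
  obtain ⟨v, hvT, hfew⟩ := exists_mem_few_below_or_few_above f hT hTc
  have hδv : δ ≤ G.degree v := (mem_filter.1 hvT).2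
  rcases hfew with hbelow | habove
  · have := G.degree_le_card_lt_add_ncard_edgeDiffs hf v
    omega
  · have := G.degree_le_card_gt_add_ncard_edgeDiffs hf v
    omega
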